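/- arXiv:gr-qc/9911123 — 8 statements merged into one kernel-verified Lean document; each statement's English description precedes it below -/
import Mathlib

section
/- Let λ, τ be real numbers with 0 < τ < λ, k := τ/λ, θ⋆ := 2π − arcsin k, and h(θ) := λ cos θ − τ θ − (λ cos θ⋆ − τ θ⋆). Then h has exactly one zero θ̂ in the open interval (θ⋆ − 2π, θ⋆); moreover this zero satisfies θ⋆ − 2π < θ̂ < 3π − θ⋆. -/
open Real Set

/-! With `α := arcsin (τ/λ)` one has `θ⋆ = 2π − α`, `3π − θ⋆ = π + α` and
`h' θ = −λ (sin θ + sin α)`. So `h` strictly decreases on `[−α, π + α]` and strictly increases on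
`[π + α, 2π − α]`. Since `h (2π − α) = 0`, `h` is negative on `[π + α, 2π − α)`, while
`h (−α) = 2πτ > 0`; the intermediate value theorem and strict monotonicity give exactly one zero,
lying in `(−α, π + α)`. -/

theorem existsUnique_zero_of_strictAntiOn_of_strictMonoOn {f : ℝ → ℝ} {a b c : ℝ}
    (hab : a ≤ b) (hbc : b < c) (hf : ContinuousOn f (Icc a b))
    (hanti : StrictAntiOn f (Icc a b)) (hmono : StrictMonoOn f (Icc b c))
    (ha : 0 < f a) (hc : f c = 0) :
    ∃ x ∈ Ioo a b, f x = 0 ∧ ∀ y ∈ Ioo a c, f y = 0 → y = x := by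
  have hneg : ∀ y ∈ Ico b c, f y < 0 := fun y hy =>
    hc ▸ hmono ⟨hy.1, hy.2.le⟩ (right_mem_Icc.2 hbc.le) hy.2
  obtain ⟨x, hx, hfx⟩ := intermediate_value_Ioo' hab hf ⟨hneg b (left_mem_Ico.2 hbc), ha⟩
  refine ⟨x, hx, hfx, fun y hy hfy => ?_⟩
  rcases lt_or_ge y b with hyb | hby
  · exact hanti.injOn ⟨hy.1.le, hyb.le⟩ ⟨hx.1.le, hx.2.le⟩ (hfy.trans hfx.symm)
  · exact absurd hfy (hneg y ⟨hby, hy.2⟩).ne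

theorem Real.sin_lt_sin_of_lt_of_lt_pi_sub {c x : ℝ} (hc : -(π / 2) ≤ c)
    (h₁ : c < x) (h₂ : x < π - c) : sin c < sin x := by
  rcases le_or_gt x (π / 2) with hx | hx
  · exact sin_lt_sin_of_lt_of_le_pi_div_two hc hx h₁
  · rw [← sin_pi_sub x]
    exact sin_lt_sin_of_lt_of_le_pi_div_two hc (by linarith) (by linarith)

section

variable {lam tau α : ℝ} (c : ℝ)

theorem hasDerivAt_mul_cos_sub_mul_sub (θ : ℝ) :
    HasDerivAt (fun θ => lam * cos θ - tau * θ - c) (-(lam * sin θ + tau)) θ := by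
  have := (((hasDerivAt_cos θ).const_mul lam).sub ((hasDerivAt_id' θ).const_mul tau)).sub_const c
  rwa [show lam * -sin θ - tau * 1 = -(lam * sin θ + tau) by ring] at this

variable (hlam : 0 < lam) (hα : lam * sin α = tau)
include hlam hα

theorem strictAntiOn_mul_cos_sub_mul_sub (hα' : α ≤ π / 2) :
    StrictAntiOn (fun θ => lam * cos θ - tau * θ - c) (Icc (-α) (π + α)) := by
  refine strictAntiOn_of_deriv_neg (convex_Icc _ _) (by fun_prop) fun x hx => ?_
  rw [interior_Icc] at hx
  rw [(hasDerivAt_mul_cos_sub_mul_sub c x).deriv, neg_lt_zero, ← hα, ← mul_add]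
  have := sin_lt_sin_of_lt_of_lt_pi_sub (c := -α) (by linarith) hx.1 (by linarith [hx.2])
  rw [sin_neg] at this
  exact mul_pos hlam (by linarith)

theorem strictMonoOn_mul_cos_sub_mul_sub (hα' : -(π / 2) ≤ α) :
    StrictMonoOn (fun θ => lam * cos θ - tau * θ - c) (Icc (π + α) (2 * π - α)) := by
  refine strictMonoOn_of_deriv_pos (convex_Icc _ _) (by fun_prop) fun x hx => ?_
  rw [interior_Icc] at hx
  rw [(hasDerivAt_mul_cos_sub_mul_sub c x).deriv, neg_pos, ← hα, ← mul_add]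
  have := sin_lt_sin_of_lt_of_lt_pi_sub (x := x - π) hα' (by linarith [hx.1]) (by linarith [hx.2])
  rw [sin_sub_pi] at this
  exact mul_neg_of_pos_of_neg hlam (by linarith)

end

/-- For `0 < τ < λ`, `k = τ/λ`, `θ⋆ = 2π − arcsin k`, and
`h θ = λ cos θ − τ θ − (λ cos θ⋆ − τ θ⋆)`, the function `h` has exactly one zero
`θ̂` in the open interval `(θ⋆ − 2π, θ⋆)`, and moreover `θ̂ < 3π − θ⋆`. -/
theorem stmt0 (lam tau k θs : ℝ) (htau : 0 < tau) (htl : tau < lam)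
    (hk : k = tau / lam) (hθs : θs = 2 * Real.pi - Real.arcsin k)
    (h : ℝ → ℝ)
    (hdef : ∀ θ, h θ = lam * Real.cos θ - tau * θ - (lam * Real.cos θs - tau * θs)) :
    ∃ θh : ℝ, θh ∈ Set.Ioo (θs - 2 * Real.pi) θs ∧ h θh = 0 ∧
      (∀ θ' ∈ Set.Ioo (θs - 2 * Real.pi) θs, h θ' = 0 → θ' = θh) ∧
      θh < 3 * Real.pi - θs := by
  have hlam : 0 < lam := htau.trans htl
  have hk₀ : 0 < k := hk ▸ div_pos htau hlam
  have hk₁ : k < 1 := hk ▸ (div_lt_one hlam).2 htl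
  set α := arcsin k
  have hα₀ : 0 < α := arcsin_pos.2 hk₀
  have hα₁ : α < π / 2 := arcsin_lt_pi_div_two.2 hk₁
  have hα : lam * sin α = tau := by
    rw [sin_arcsin (by linarith) hk₁.le, hk, mul_div_cancel₀ _ hlam.ne']
  rw [hθs] at hdef ⊢
  obtain rfl : h = fun θ => lam * cos θ - tau * θ - (lam * cos (2 * π - α) - tau * (2 * π - α)) :=
    funext hdef
  obtain ⟨x, hx, hx₀, huniq⟩ := existsUnique_zero_of_strictAntiOn_of_strictMonoOn
    (by linarith) (by linarith) (by fun_prop)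
    (strictAntiOn_mul_cos_sub_mul_sub _ hlam hα hα₁.le)
    (strictMonoOn_mul_cos_sub_mul_sub _ hlam hα (by linarith))
    (by rw [cos_neg, cos_two_pi_sub]; nlinarith [pi_pos]) (sub_self _)
  rw [show 2 * π - α - 2 * π = -α by ring, show 3 * π - (2 * π - α) = π + α by ring]
  exact ⟨x, ⟨hx.1, hx.2.trans (by linarith)⟩, hx₀, huniq, hx.2⟩
end

section
/- Let λ, τ be real numbers with 0 < τ < λ, k := τ/λ, θ⋆ := 2π − arcsin k, and h(θ) := λ cos θ − τ θ − (λ cos θ⋆ − τ θ⋆). On the interval (θ⋆ − 2π, θ⋆), h is strictly decreasing on (θ⋆ − 2π, 3π − θ⋆) and strictly increasing on (3π − θ⋆, θ⋆); moreover h(θ⋆ − 2π) = 2πτ > 0, h(3π − θ⋆) < 0, and h(θ⋆) = 0. -/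
/-!
Write `a := arcsin (τ/λ)`, so `θ⋆ = 2π - a`, `θ⋆ - 2π = -a`, `3π - θ⋆ = π + a` and `λ sin a = τ`.
Then `h' θ = -λ (sin θ + sin a)`, which is negative on `(-a, π + a)`, where `sin θ > -sin a`,
and positive on `(π + a, 2π - a)`, where `sin θ < -sin a`.
-/

open Real Set

theorem Real.sin_lt_sin_of_lt_of_lt_pi_sub_s1 {b x : ℝ} (hb : -(π / 2) ≤ b) (hbx : b < x)
    (hx : x < π - b) : sin b < sin x := by
  rcases le_or_gt x (π / 2) with hle | hgt
  · exact strictMonoOn_sin ⟨hb, hbx.le.trans hle⟩ ⟨hb.trans hbx.le, hle⟩ hbx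
  · rw [← sin_pi_sub x]
    exact strictMonoOn_sin ⟨hb, by linarith⟩ ⟨by linarith, by linarith⟩ (by linarith)

section CosSubLinear

variable {lam tau a : ℝ} (c : ℝ)

theorem hasDerivAt_cos_sub_linear (x : ℝ) :
    HasDerivAt (fun θ ↦ lam * cos θ - tau * θ - c) (-(lam * sin x) - tau) x := by
  simpa using (((hasDerivAt_cos x).const_mul lam).sub ((hasDerivAt_id x).const_mul tau)).sub_const c

theorem continuous_cos_sub_linear : Continuous (fun θ ↦ lam * cos θ - tau * θ - c) := by
  fun_prop

theorem strictAntiOn_cos_sub_linear (hlam : 0 < lam) (ha : a ∈ Icc (-(π / 2)) (π / 2))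
    (hsin : lam * sin a = tau) :
    StrictAntiOn (fun θ ↦ lam * cos θ - tau * θ - c) (Icc (-a) (π + a)) := by
  refine strictAntiOn_of_deriv_neg (convex_Icc _ _) (continuous_cos_sub_linear c).continuousOn ?_
  intro x hx
  rw [interior_Icc] at hx
  have hsin_gt : -sin a < sin x := by
    simpa using sin_lt_sin_of_lt_of_lt_pi_sub_s1 (by linarith [ha.2]) hx.1 (by linarith [hx.2])
  rw [(hasDerivAt_cos_sub_linear c x).deriv]
  linarith [mul_pos hlam (sub_pos.2 hsin_gt)]

theorem strictMonoOn_cos_sub_linear (hlam : 0 < lam) (ha : a ∈ Icc (-(π / 2)) (π / 2))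
    (hsin : lam * sin a = tau) :
    StrictMonoOn (fun θ ↦ lam * cos θ - tau * θ - c) (Icc (π + a) (2 * π - a)) := by
  refine strictMonoOn_of_deriv_pos (convex_Icc _ _) (continuous_cos_sub_linear c).continuousOn ?_
  intro x hx
  rw [interior_Icc] at hx
  have hsin_lt : sin x < -sin a := by
    have := sin_lt_sin_of_lt_of_lt_pi_sub_s1 ha.1 (by linarith [hx.1]) (by linarith [hx.2] :
      x - π < π - a)
    rwa [sin_sub_pi, lt_neg] at this
  rw [(hasDerivAt_cos_sub_linear c x).deriv]
  linarith [mul_pos hlam (sub_pos.2 hsin_lt)]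

end CosSubLinear

/-- On `(θ⋆ − 2π, θ⋆)`, the function `h` is strictly decreasing on
`(θ⋆ − 2π, 3π − θ⋆)` and strictly increasing on `(3π − θ⋆, θ⋆)`; moreover
`h(θ⋆ − 2π) = 2πτ > 0`, `h(3π − θ⋆) < 0`, and `h(θ⋆) = 0`. -/
theorem stmt1 (lam tau k θs : ℝ) (htau : 0 < tau) (htl : tau < lam)
    (hk : k = tau / lam) (hθs : θs = 2 * Real.pi - Real.arcsin k)
    (h : ℝ → ℝ)
    (hdef : ∀ θ, h θ = lam * Real.cos θ - tau * θ - (lam * Real.cos θs - tau * θs)) :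
    StrictAntiOn h (Set.Ioo (θs - 2 * Real.pi) (3 * Real.pi - θs)) ∧
    StrictMonoOn h (Set.Ioo (3 * Real.pi - θs) θs) ∧
    h (θs - 2 * Real.pi) = 2 * Real.pi * tau ∧
    0 < 2 * Real.pi * tau ∧
    h (3 * Real.pi - θs) < 0 ∧
    h θs = 0 := by
  have hlam : 0 < lam := htau.trans htl
  set a := arcsin k
  have ha : a ∈ Icc (-(π / 2)) (π / 2) := ⟨neg_pi_div_two_le_arcsin k, arcsin_le_pi_div_two k⟩
  have hk0 : 0 < k := hk ▸ div_pos htau hlam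
  have hk1 : k < 1 := by rwa [hk, div_lt_one hlam]
  have hsin : lam * sin a = tau := by
    rw [sin_arcsin (by linarith) hk1.le, hk]
    field_simp
  obtain rfl : h = fun θ ↦ lam * cos θ - tau * θ - (lam * cos θs - tau * θs) := funext hdef
  have hleft : θs - 2 * π = -a := by rw [hθs]; ring
  have hmid : 3 * π - θs = π + a := by rw [hθs]; ring
  have hanti := strictAntiOn_cos_sub_linear (lam * cos θs - tau * θs) hlam ha hsin
  have hmono := strictMonoOn_cos_sub_linear (lam * cos θs - tau * θs) hlam ha hsin
  have hmid_lt : π + a < 2 * π - a := by linarith [arcsin_lt_pi_div_two.2 hk1]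
  rw [hleft, hmid]
  refine ⟨hanti.mono Ioo_subset_Icc_self, hθs ▸ hmono.mono Ioo_subset_Icc_self,
    by simp only [← hleft, cos_sub_two_pi]; ring, by positivity, ?_, by simp⟩
  simpa [hθs] using hmono (left_mem_Icc.2 hmid_lt.le) (right_mem_Icc.2 hmid_lt.le) hmid_lt
end

section
/- Let λ, τ be real numbers with 0 < τ < λ, k := τ/λ, θ⋆ := 2π − arcsin k, and h(θ) := λ cos θ − τ θ − (λ cos θ⋆ − τ θ⋆). If θ̂ is the unique zero of h in (θ⋆ − 2π, θ⋆), then λ sin θ̂ + τ ≠ 0; in fact h'(θ̂) = −λ sin θ̂ − τ < 0, so the point (θ̂, 0) is not a rest point of the system θ' = v, v' = λ sin θ + τ. -/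
/-!
The function `h` is `V θ - V θ⋆` for the potential `V θ = λ cos θ - τ θ`, whose derivative
`-(λ sin θ + τ)` is negative exactly where `sin θ > -k`. With `α = arcsin k`, this holds on
`(-α, π + α)`, while `V` is strictly increasing on `[π + α, 2π - α] = [π + α, θ⋆]`. Since
`h θ⋆ = 0`, `h` has no zero in `[π + α, θ⋆)`, so the zero `θ̂` lies in `(θ⋆ - 2π, π + α)`,
where `h'(θ̂) < 0`.
-/

open Real Set

/-- `v ^ 2 / 2 + pendulumPotential lam tau θ` is conserved by `θ' = v, v' = lam * sin θ + tau`. -/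
noncomputable def pendulumPotential (lam tau θ : ℝ) : ℝ := lam * cos θ - tau * θ

theorem hasDerivAt_pendulumPotential (lam tau θ : ℝ) :
    HasDerivAt (pendulumPotential lam tau) (-(lam * sin θ) - tau) θ := by
  have h := ((hasDerivAt_cos θ).const_mul lam).sub ((hasDerivAt_id θ).const_mul tau)
  rw [mul_neg, mul_one] at h
  exact h

theorem Real.sin_lt_sin_of_lt_of_lt_pi_sub_s2 {a x : ℝ} (ha : -(π / 2) ≤ a) (hax : a < x)
    (hx : x < π - a) : sin a < sin x := by
  rcases le_or_gt x (π / 2) with hx' | hx'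
  · exact sin_lt_sin_of_lt_of_le_pi_div_two ha hx' hax
  · rw [← sin_pi_sub x]
    exact sin_lt_sin_of_lt_of_le_pi_div_two ha (by linarith) (by linarith)

theorem Real.neg_lt_sin_of_mem_Ioo {k x : ℝ} (hk : k ∈ Icc (-1) 1)
    (hx : x ∈ Ioo (-arcsin k) (π + arcsin k)) : -k < sin x := by
  have h := sin_lt_sin_of_lt_of_lt_pi_sub_s2 (by linarith [arcsin_le_pi_div_two k]) hx.1
    (by linarith [hx.2])
  rwa [sin_neg, sin_arcsin hk.1 hk.2] at h

theorem Real.sin_lt_neg_of_mem_Ioo {k x : ℝ} (hk : k ∈ Icc (-1) 1)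
    (hx : x ∈ Ioo (π + arcsin k) (2 * π - arcsin k)) : sin x < -k := by
  have h := sin_lt_sin_of_lt_of_lt_pi_sub_s2 (neg_pi_div_two_le_arcsin k)
    (by linarith [hx.1] : arcsin k < x - π) (by linarith [hx.2])
  rw [sin_sub_pi, sin_arcsin hk.1 hk.2] at h
  linarith

theorem div_mem_Icc_neg_one_one {lam tau : ℝ} (hlam : 0 < lam) (htau : |tau| ≤ lam) :
    tau / lam ∈ Icc (-1) 1 := by
  rw [mem_Icc, le_div_iff₀ hlam, div_le_iff₀ hlam]
  constructor <;> linarith [abs_le.1 htau]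

theorem strictMonoOn_pendulumPotential {lam tau : ℝ} (hlam : 0 < lam) (htau : |tau| ≤ lam) :
    StrictMonoOn (pendulumPotential lam tau)
      (Icc (π + arcsin (tau / lam)) (2 * π - arcsin (tau / lam))) := by
  refine strictMonoOn_of_deriv_pos (convex_Icc _ _)
    (fun x _ => (hasDerivAt_pendulumPotential lam tau x).continuousAt.continuousWithinAt)
    fun x hx => ?_
  rw [interior_Icc] at hx
  have hsin := sin_lt_neg_of_mem_Ioo (div_mem_Icc_neg_one_one hlam htau) hx
  rw [(hasDerivAt_pendulumPotential lam tau x).deriv]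
  have := mul_lt_mul_of_pos_left hsin hlam
  rw [mul_neg, mul_div_cancel₀ tau hlam.ne'] at this
  linarith

theorem lam_mul_sin_add_pos_of_mem_Ioo {lam tau x : ℝ} (hlam : 0 < lam) (htau : |tau| ≤ lam)
    (hx : x ∈ Ioo (-arcsin (tau / lam)) (π + arcsin (tau / lam))) : 0 < lam * sin x + tau := by
  have := mul_lt_mul_of_pos_left (neg_lt_sin_of_mem_Ioo (div_mem_Icc_neg_one_one hlam htau) hx)
    hlam
  rw [mul_neg, mul_div_cancel₀ tau hlam.ne'] at this
  linarith

/-- If `θ̂` is the unique zero of `h` in `(θ⋆ − 2π, θ⋆)`, then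
`λ sin θ̂ + τ ≠ 0`; in fact `h'(θ̂) = −λ sin θ̂ − τ < 0`, so `(θ̂, 0)` is not a
rest point of the system `θ' = v`, `v' = λ sin θ + τ`. -/
theorem stmt2 (lam tau k θs : ℝ) (htau : 0 < tau) (htl : tau < lam)
    (hk : k = tau / lam) (hθs : θs = 2 * Real.pi - Real.arcsin k)
    (h : ℝ → ℝ)
    (hdef : ∀ θ, h θ = lam * Real.cos θ - tau * θ - (lam * Real.cos θs - tau * θs))
    (θh : ℝ) (hmem : θh ∈ Set.Ioo (θs - 2 * Real.pi) θs) (hzero : h θh = 0) :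
    lam * Real.sin θh + tau ≠ 0 ∧
    deriv h θh = -(lam * Real.sin θh) - tau ∧
    deriv h θh < 0 := by
  subst hk
  have hlam : 0 < lam := htau.trans htl
  have habs : |tau| ≤ lam := (abs_of_pos htau).trans_le htl.le
  obtain rfl : h = fun θ => pendulumPotential lam tau θ - pendulumPotential lam tau θs :=
    funext hdef
  have hderiv : deriv (fun θ => pendulumPotential lam tau θ - pendulumPotential lam tau θs) θh =
      -(lam * sin θh) - tau :=
    ((hasDerivAt_pendulumPotential lam tau θh).sub_const _).deriv
  have hlt : θh < π + arcsin (tau / lam) := by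
    by_contra! hge
    have := strictMonoOn_pendulumPotential hlam habs ⟨hge, hθs ▸ hmem.2.le⟩
      ⟨by linarith [hmem.2], hθs.le⟩ hmem.2
    linarith
  have hpos := lam_mul_sin_add_pos_of_mem_Ioo hlam habs ⟨by linarith [hmem.1], hlt⟩
  exact ⟨hpos.ne', hderiv, by linarith⟩
end

section
/- Let λ, τ be real numbers with 0 < τ < λ, k := τ/λ, θ⋆ := 2π − arcsin k, and h(θ) := λ cos θ − τ θ − (λ cos θ⋆ − τ θ⋆). Then for every θ > θ⋆ one has h(θ) < 0; in particular the equation λ cos θ − τ θ = λ cos θ⋆ − τ θ⋆ has no solution with θ > θ⋆. -/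
open Real Set

private lemma sin_gt_aux {k : ℝ} (hk0 : 0 < k) (hk1 : k < 1) {s : ℝ}
    (h1 : -Real.arcsin k < s) (h2 : s < Real.pi + Real.arcsin k) :
    -k < Real.sin s := by
  set a := Real.arcsin k with ha
  have ha0 : 0 < a := Real.arcsin_pos.2 hk0
  have ha2 : a < Real.pi / 2 := Real.arcsin_lt_pi_div_two.2 hk1
  have hsin_a : Real.sin a = k := Real.sin_arcsin (by linarith) hk1.le
  have hpi := Real.pi_gt_three
  rcases le_or_gt s (Real.pi / 2) with hs | hs
  · have := Real.strictMonoOn_sin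
      (show -a ∈ Icc (-(Real.pi/2)) (Real.pi/2) from ⟨by linarith, by linarith⟩)
      (show s ∈ Icc (-(Real.pi/2)) (Real.pi/2) from ⟨by linarith, by linarith⟩) h1
    rwa [Real.sin_neg, hsin_a] at this
  · rw [← Real.sin_pi_sub]
    have := Real.strictMonoOn_sin
      (show -a ∈ Icc (-(Real.pi/2)) (Real.pi/2) from ⟨by linarith, by linarith⟩)
      (show Real.pi - s ∈ Icc (-(Real.pi/2)) (Real.pi/2) from ⟨by linarith, by linarith⟩)
      (by linarith)
    rwa [Real.sin_neg, hsin_a] at this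

private lemma sin_ge_aux {k : ℝ} (hk0 : 0 < k) (hk1 : k < 1) {s : ℝ}
    (h1 : Real.arcsin k ≤ s) (h2 : s ≤ Real.pi - Real.arcsin k) :
    k ≤ Real.sin s := by
  set a := Real.arcsin k with ha
  have ha0 : 0 < a := Real.arcsin_pos.2 hk0
  have ha2 : a < Real.pi / 2 := Real.arcsin_lt_pi_div_two.2 hk1
  have hsin_a : Real.sin a = k := Real.sin_arcsin (by linarith) hk1.le
  have hpi := Real.pi_gt_three
  rcases le_or_gt s (Real.pi / 2) with hs | hs
  · have := Real.strictMonoOn_sin.monotoneOn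
      (show a ∈ Icc (-(Real.pi/2)) (Real.pi/2) from ⟨by linarith, by linarith⟩)
      (show s ∈ Icc (-(Real.pi/2)) (Real.pi/2) from ⟨by linarith, by linarith⟩) h1
    rwa [hsin_a] at this
  · rw [← Real.sin_pi_sub]
    have := Real.strictMonoOn_sin.monotoneOn
      (show a ∈ Icc (-(Real.pi/2)) (Real.pi/2) from ⟨by linarith, by linarith⟩)
      (show Real.pi - s ∈ Icc (-(Real.pi/2)) (Real.pi/2) from ⟨by linarith, by linarith⟩)
      (by linarith)
    rwa [hsin_a] at this

private lemma derivF (k : ℝ) (x : ℝ) :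
    deriv (fun θ : ℝ => Real.cos θ - k * θ) x = -Real.sin x - k := by
  have : HasDerivAt (fun θ : ℝ => Real.cos θ - k * θ) (-Real.sin x - k * 1) x :=
    (Real.hasDerivAt_cos x).sub ((hasDerivAt_id x).const_mul k)
  simpa using this.deriv

private lemma key {k : ℝ} (hk0 : 0 < k) (hk1 : k < 1) :
    ∀ θ, 2 * Real.pi - Real.arcsin k < θ →
      Real.cos θ - k * θ <
        Real.cos (2 * Real.pi - Real.arcsin k) - k * (2 * Real.pi - Real.arcsin k) := by
  set a := Real.arcsin k with ha
  have ha0 : 0 < a := Real.arcsin_pos.2 hk0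
  have ha2 : a < Real.pi / 2 := Real.arcsin_lt_pi_div_two.2 hk1
  have hpi := Real.pi_gt_three
  set θs := 2 * Real.pi - a with hθs
  set F : ℝ → ℝ := fun θ => Real.cos θ - k * θ with hF
  have hdiff : Differentiable ℝ F := fun x =>
    ((Real.hasDerivAt_cos x).sub ((hasDerivAt_id x).const_mul k)).differentiableAt
  -- F strictly antitone on [θs, 3π + a]
  have hanti : StrictAntiOn F (Icc θs (3 * Real.pi + a)) := by
    apply strictAntiOn_of_deriv_neg (convex_Icc _ _) hdiff.continuous.continuousOn
    intro x hx
    rw [interior_Icc, mem_Ioo] at hx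
    rw [derivF]
    have : -k < Real.sin (x - 2 * Real.pi) := by
      apply sin_gt_aux hk0 hk1 <;> [skip; skip] <;> · rw [← ha]; linarith [hx.1, hx.2]
    have hs : Real.sin (x - 2 * Real.pi) = Real.sin x := by
      rw [show x - 2 * Real.pi = (x - 2*Real.pi) from rfl,
        ← Real.sin_add_two_pi (x - 2 * Real.pi)]; ring_nf
    linarith [this, hs.symm ▸ this]
  -- F monotone on [3π + a, 4π - a]
  have hmono : MonotoneOn F (Icc (3 * Real.pi + a) (4 * Real.pi - a)) := by
    apply monotoneOn_of_deriv_nonneg (convex_Icc _ _) hdiff.continuous.continuousOn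
      (hdiff.differentiableOn)
    intro x hx
    rw [interior_Icc, mem_Ioo] at hx
    rw [derivF]
    have h1 : k ≤ Real.sin (x - 3 * Real.pi) := by
      apply sin_ge_aux hk0 hk1 <;> · rw [← ha]; linarith [hx.1, hx.2]
    have hs : Real.sin (x - 3 * Real.pi) = -Real.sin x := by
      have := Real.sin_add_pi (x - 3 * Real.pi)
      have h2 := Real.sin_add_two_pi (x - 3 * Real.pi + Real.pi)
      rw [this] at h2
      rw [show x - 3 * Real.pi + Real.pi + 2 * Real.pi = x by ring] at h2
      linarith
    rw [hs] at h1; linarith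
  -- base interval
  have hbase : ∀ θ, θs < θ → θ ≤ θs + 2 * Real.pi → F θ < F θs := by
    intro θ h1 h2
    rcases le_or_gt θ (3 * Real.pi + a) with hc | hc
    · exact hanti ⟨le_refl _, by rw [hθs]; linarith⟩ ⟨h1.le, hc⟩ h1
    · have hle : F θ ≤ F (4 * Real.pi - a) :=
        hmono ⟨hc.le, by rw [hθs] at h2; linarith⟩ ⟨by linarith, le_refl _⟩
          (by rw [hθs] at h2; linarith)
      have hFe : F (4 * Real.pi - a) = F θs - k * (2 * Real.pi) := by
        show Real.cos _ - k * _ = (Real.cos θs - k * θs) - k * (2 * Real.pi)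
        have : Real.cos (4 * Real.pi - a) = Real.cos θs := by
          rw [← Real.cos_sub_two_pi (4 * Real.pi - a)]
          congr 1; rw [hθs]; ring
        rw [this, hθs]; ring
      have : 0 < k * (2 * Real.pi) := by positivity
      linarith
  -- induction on number of periods
  have hind : ∀ n : ℕ, ∀ θ, θs < θ → θ ≤ θs + 2 * Real.pi * (n + 1) → F θ < F θs := by
    intro n
    induction n with
    | zero => intro θ h1 h2; refine hbase θ h1 ?_; push_cast at h2; linarith
    | succ m ih =>
      intro θ h1 h2
      rcases le_or_gt θ (θs + 2 * Real.pi * (m + 1)) with hc | hc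
      · exact ih θ h1 hc
      · have h1' : θs < θ - 2 * Real.pi := by
          have : (0:ℝ) ≤ 2 * Real.pi * m := by positivity
          nlinarith
        have h2' : θ - 2 * Real.pi ≤ θs + 2 * Real.pi * (m + 1) := by
          push_cast at h2 ⊢; linarith
        have hFp : F θ = F (θ - 2 * Real.pi) - k * (2 * Real.pi) := by
          show Real.cos θ - k * θ = (Real.cos (θ - 2 * Real.pi) - k * (θ - 2 * Real.pi))
            - k * (2 * Real.pi)
          rw [Real.cos_sub_two_pi]; ring
        have := ih (θ - 2 * Real.pi) h1' h2'
        have : 0 < k * (2 * Real.pi) := by positivity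
        linarith [ih (θ - 2 * Real.pi) h1' h2']
  intro θ hθ
  obtain ⟨n, hn⟩ := exists_nat_gt ((θ - θs) / (2 * Real.pi))
  have h2pi : (0:ℝ) < 2 * Real.pi := by positivity
  have : θ - θs < 2 * Real.pi * n := by
    rw [div_lt_iff₀ h2pi] at hn; linarith
  exact hind n θ hθ (by push_cast; nlinarith)

/-- For every `θ > θ⋆` one has `h(θ) < 0`; in particular the
equation `λ cos θ − τθ = λ cos θ⋆ − τθ⋆` has no solution with `θ > θ⋆`. -/
theorem stmt3 (lam tau k θs : ℝ) (htau : 0 < tau) (htl : tau < lam)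
    (hk : k = tau / lam) (hθs : θs = 2 * Real.pi - Real.arcsin k)
    (h : ℝ → ℝ)
    (hdef : ∀ θ, h θ = lam * Real.cos θ - tau * θ - (lam * Real.cos θs - tau * θs)) :
    (∀ θ, θs < θ → h θ < 0) ∧
    ¬ ∃ θ, θs < θ ∧ lam * Real.cos θ - tau * θ = lam * Real.cos θs - tau * θs := by
  have hlam : 0 < lam := htau.trans htl
  have hk0 : 0 < k := by rw [hk]; positivity
  have hk1 : k < 1 := by rw [hk, div_lt_one hlam]; exact htl
  have htk : tau = k * lam := by rw [hk]; field_simp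
  subst hθs
  have main : ∀ θ, 2 * Real.pi - Real.arcsin k < θ → h θ < 0 := by
    intro θ hθ
    have hkey := key hk0 hk1 θ hθ
    rw [hdef]
    nlinarith [mul_lt_mul_of_pos_left hkey hlam]
  refine ⟨main, ?_⟩
  rintro ⟨θ, hθ, heq⟩
  have := main θ hθ
  rw [hdef, heq] at this
  linarith
end

section
/- Let λ, τ be real numbers with 0 < τ < λ, k := τ/λ, θ⋆ := 2π − arcsin k, h(θ) := λ cos θ − τ θ − (λ cos θ⋆ − τ θ⋆), and let θ̂ be the unique zero of h in (θ⋆ − 2π, θ⋆). Then h(θ) < 0 for every θ in the open interval (θ̂, θ⋆); consequently the homoclinic level set {(θ, v) : ½v² + λ cos θ − τθ = λ cos θ⋆ − τθ⋆, θ̂ ≤ θ ≤ θ⋆} equals the union of the two graphs v = ±√(−2h(θ)) for θ̂ ≤ θ ≤ θ⋆. -/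
open Real Set

lemma aux_sin (b θ : ℝ) (hb1 : -(Real.pi/2) ≤ b) (hb2 : b ≤ Real.pi/2)
    (h1 : b < θ) (h2 : θ < Real.pi - b) : Real.sin b < Real.sin θ := by
  rcases le_or_gt θ (Real.pi/2) with hle | hgt
  · exact Real.strictMonoOn_sin ⟨hb1, hb2⟩ ⟨by linarith, hle⟩ h1
  · rw [← Real.sin_pi_sub θ]
    exact Real.strictMonoOn_sin ⟨hb1, hb2⟩ ⟨by linarith, by linarith⟩ (by linarith)

/-- With `θ̂` the unique zero of `h` in `(θ⋆ − 2π, θ⋆)`, one has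
`h(θ) < 0` on `(θ̂, θ⋆)`; consequently the homoclinic level set
`{(θ, v) : ½v² + λ cos θ − τθ = λ cos θ⋆ − τθ⋆, θ̂ ≤ θ ≤ θ⋆}` equals the union
of the two graphs `v = ±√(−2h(θ))` over `θ̂ ≤ θ ≤ θ⋆`. -/
theorem stmt4 (lam tau k θs : ℝ) (htau : 0 < tau) (htl : tau < lam)
    (hk : k = tau / lam) (hθs : θs = 2 * Real.pi - Real.arcsin k)
    (h : ℝ → ℝ)
    (hdef : ∀ θ, h θ = lam * Real.cos θ - tau * θ - (lam * Real.cos θs - tau * θs))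
    (θh : ℝ) (hmem : θh ∈ Set.Ioo (θs - 2 * Real.pi) θs) (hzero : h θh = 0) :
    (∀ θ ∈ Set.Ioo θh θs, h θ < 0) ∧
    {z : ℝ × ℝ | (1/2) * z.2^2 + lam * Real.cos z.1 - tau * z.1
        = lam * Real.cos θs - tau * θs ∧ θh ≤ z.1 ∧ z.1 ≤ θs}
      = {z : ℝ × ℝ | θh ≤ z.1 ∧ z.1 ≤ θs ∧
          (z.2 = Real.sqrt (-2 * h z.1) ∨ z.2 = -Real.sqrt (-2 * h z.1))} := by
  have hlam : 0 < lam := htau.trans htl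
  have hk0 : 0 < k := by rw [hk]; positivity
  have hk1 : k < 1 := by rw [hk]; exact (div_lt_one hlam).2 htl
  have hlk : lam * k = tau := by rw [hk]; field_simp
  set a := Real.arcsin k with ha
  have hsa : Real.sin a = k := Real.sin_arcsin (by linarith) hk1.le
  have ha0 : 0 < a := Real.arcsin_pos.2 hk0
  have ha2 : a < Real.pi / 2 := by
    have := Real.arcsin_lt_pi_div_two (x := k)
    rw [this]; exact hk1
  have hpi : 0 < Real.pi := Real.pi_pos
  set θm := Real.pi + a with hθm
  have heq : h = fun θ => lam * Real.cos θ - tau * θ - (lam * Real.cos θs - tau * θs) :=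
    funext hdef
  have hderiv : ∀ θ, HasDerivAt h (-(lam * Real.sin θ) - tau) θ := by
    intro θ
    rw [heq]
    have h1 : HasDerivAt (fun θ : ℝ => lam * Real.cos θ) (lam * (-Real.sin θ)) θ :=
      (Real.hasDerivAt_cos θ).const_mul lam
    have h2 : HasDerivAt (fun θ : ℝ => tau * θ) tau θ := by
      simpa using (hasDerivAt_id θ).const_mul tau
    have := (h1.sub h2).sub_const (lam * Real.cos θs - tau * θs)
    simpa [mul_comm] using this
  have hcont : ContinuousOn h (Set.univ) := by
    rw [heq]; fun_prop
  -- h θs = 0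
  have hθs0 : h θs = 0 := by rw [hdef]; ring
  have hleft : θs - 2 * Real.pi = -a := by rw [hθs]; ring
  -- monotone on [θm, θs]
  have hmono : StrictMonoOn h (Set.Icc θm θs) := by
    apply strictMonoOn_of_deriv_pos (convex_Icc _ _) (hcont.mono (Set.subset_univ _))
    intro x hx
    rw [interior_Icc] at hx
    have hsin : Real.sin x < -k := by
      have : Real.sin a < Real.sin (x - Real.pi) := by
        apply aux_sin a _ (by linarith) ha2.le
        · have := hx.1; rw [hθm] at this; linarith
        · have := hx.2; rw [hθs] at this; linarith
      rw [Real.sin_sub_pi] at this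
      rw [hsa] at this; linarith
    rw [(hderiv x).deriv]
    nlinarith
  -- anti on [θs - 2π, θm]
  have hanti : StrictAntiOn h (Set.Icc (θs - 2 * Real.pi) θm) := by
    apply strictAntiOn_of_deriv_neg (convex_Icc _ _) (hcont.mono (Set.subset_univ _))
    intro x hx
    rw [interior_Icc] at hx
    have hsin : -k < Real.sin x := by
      have : Real.sin (-a) < Real.sin x := by
        apply aux_sin (-a) _ (by linarith) (by linarith)
        · have := hx.1; rw [hleft] at this; linarith
        · have := hx.2; rw [hθm] at this; linarith
      rwa [Real.sin_neg, hsa] at this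
    rw [(hderiv x).deriv]
    nlinarith
  have hθmθs : θm < θs := by rw [hθm, hθs]; linarith
  -- negative on [θm, θs)
  have hneg2 : ∀ θ, θm ≤ θ → θ < θs → h θ < 0 := by
    intro θ h1 h2
    have := hmono ⟨h1, h2.le⟩ ⟨(h1.trans h2.le), le_refl _⟩ h2
    rwa [hθs0] at this
  have hθhm : θh < θm := by
    by_contra hcon
    push_neg at hcon
    have := hneg2 θh hcon hmem.2
    linarith [hzero]
  have part1 : ∀ θ ∈ Set.Ioo θh θs, h θ < 0 := by
    intro θ hθ
    rcases le_or_gt θ θm with hle | hgt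
    · have := hanti ⟨hmem.1.le, hθhm.le⟩ ⟨by linarith [hmem.1, hθ.1], hle⟩ hθ.1
      rwa [hzero] at this
    · exact hneg2 θ hgt.le hθ.2
  have hle0 : ∀ θ, θh ≤ θ → θ ≤ θs → h θ ≤ 0 := by
    intro θ h1 h2
    rcases h1.eq_or_lt with rfl | h1'
    · exact hzero.le
    rcases h2.eq_or_lt with rfl | h2'
    · exact hθs0.le
    exact (part1 θ ⟨h1', h2'⟩).le
  refine ⟨part1, ?_⟩
  ext ⟨θ, v⟩
  simp only [Set.mem_setOf_eq]
  constructor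
  · rintro ⟨heqn, h1, h2⟩
    refine ⟨h1, h2, ?_⟩
    have hv2 : v ^ 2 = -2 * h θ := by rw [hdef]; linarith
    have : Real.sqrt (-2 * h θ) = |v| := by rw [← hv2, Real.sqrt_sq_eq_abs]
    rcases abs_cases v with ⟨hc, _⟩ | ⟨hc, _⟩
    · left; rw [this, hc]
    · right; rw [this, hc]; ring
  · rintro ⟨h1, h2, hv⟩
    have hnn : 0 ≤ -2 * h θ := by linarith [hle0 θ h1 h2]
    have hv2 : v ^ 2 = -2 * h θ := by
      rcases hv with rfl | rfl
      · exact Real.sq_sqrt hnn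
      · rw [neg_pow, Real.sq_sqrt hnn]; ring
    refine ⟨?_, h1, h2⟩
    have := hdef θ
    linarith
end

section
/- Let λ, τ be real numbers with 0 < τ < λ, k := τ/λ, θ⋆ := 2π − arcsin k, h(θ) := λ cos θ − τ θ − (λ cos θ⋆ − τ θ⋆), and let θ̂ be the unique zero of h in (θ⋆ − 2π, θ⋆). Then the following are equivalent: (i) θ̂ > π; (ii) τ(θ⋆ − π) − λ(1 + cos θ⋆) > 0; (iii) (1 + √(1 − k²))/k + arcsin k < π. -/
open Real Set

/-- With `θ̂` the unique zero of `h` in `(θ⋆ − 2π, θ⋆)`, the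
following are equivalent: (i) `θ̂ > π`; (ii) `τ(θ⋆ − π) − λ(1 + cos θ⋆) > 0`;
(iii) `(1 + √(1 − k²))/k + arcsin k < π`. -/
theorem stmt5 (lam tau k θs : ℝ) (htau : 0 < tau) (htl : tau < lam)
    (hk : k = tau / lam) (hθs : θs = 2 * Real.pi - Real.arcsin k)
    (h : ℝ → ℝ)
    (hdef : ∀ θ, h θ = lam * Real.cos θ - tau * θ - (lam * Real.cos θs - tau * θs))
    (θh : ℝ) (hmem : θh ∈ Set.Ioo (θs - 2 * Real.pi) θs) (hzero : h θh = 0) :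
    (Real.pi < θh ↔ 0 < tau * (θs - Real.pi) - lam * (1 + Real.cos θs)) ∧
    (Real.pi < θh ↔
      (1 + Real.sqrt (1 - k^2)) / k + Real.arcsin k < Real.pi) := by
  have hlam : 0 < lam := htau.trans htl
  have hk0 : 0 < k := hk ▸ div_pos htau hlam
  have hk1 : k < 1 := hk ▸ (div_lt_one hlam).mpr htl
  have hpi := Real.pi_gt_three
  set a := Real.arcsin k with ha
  have ha0 : 0 < a := Real.arcsin_pos.mpr hk0
  have ha2 : a < Real.pi / 2 := Real.arcsin_lt_pi_div_two.mpr hk1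
  have hsina : Real.sin a = k := Real.sin_arcsin (by linarith) hk1.le
  have hcosθs : Real.cos θs = Real.sqrt (1 - k ^ 2) := by
    rw [hθs, show 2 * Real.pi - a = -a + 2 * Real.pi by ring, Real.cos_add_two_pi,
      Real.cos_neg, Real.cos_arcsin]
  have hfun : h = fun θ => lam * Real.cos θ - tau * θ -
      (lam * Real.cos θs - tau * θs) := funext hdef
  have hcont : Continuous h := by rw [hfun]; continuity
  have hderiv : ∀ θ : ℝ, deriv h θ = -(lam * Real.sin θ) - tau := by
    intro θ
    have : HasDerivAt h (lam * -Real.sin θ - tau * 1) θ := by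
      rw [hfun]
      exact (((Real.hasDerivAt_cos θ).const_mul lam).sub
        ((hasDerivAt_id θ).const_mul tau)).sub_const _
    rw [this.deriv]; ring
  -- θs - 2π = -a
  have hlo : θs - 2 * Real.pi = -a := by rw [hθs]; ring
  -- strict anti on [-a, π + a]
  have hanti : StrictAntiOn h (Set.Icc (-a) (Real.pi + a)) := by
    apply strictAntiOn_of_deriv_neg (convex_Icc _ _) hcont.continuousOn
    intro x hx
    rw [interior_Icc] at hx
    rw [hderiv]
    have hsx : -k < Real.sin x := by
      rcases le_or_gt x (Real.pi / 2) with hx2 | hx2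
      · have := Real.strictMonoOn_sin (a := -a) (b := x)
          ⟨by linarith, by linarith⟩ ⟨by linarith [hx.1], hx2⟩ hx.1
        rwa [Real.sin_neg, hsina] at this
      · have := Real.strictMonoOn_sin (a := -a) (b := Real.pi - x)
          ⟨by linarith, by linarith⟩ ⟨by linarith [hx.2], by linarith⟩
          (by linarith [hx.2])
        rwa [Real.sin_neg, hsina, Real.sin_pi_sub] at this
    have : -tau < lam * Real.sin x := by
      have := (mul_lt_mul_iff_right₀ hlam).mpr hsx
      rw [hk] at this
      calc -tau = lam * -(tau / lam) := by field_simp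
        _ < lam * Real.sin x := this
    linarith
  -- strict mono on [π + a, θs]
  have hmono : StrictMonoOn h (Set.Icc (Real.pi + a) θs) := by
    apply strictMonoOn_of_deriv_pos (convex_Icc _ _) hcont.continuousOn
    intro x hx
    rw [interior_Icc] at hx
    rw [hderiv]
    have hθsv : θs = 2 * Real.pi - a := hθs
    have hsx : Real.sin x < -k := by
      rcases le_or_gt x (3 * Real.pi / 2) with hx2 | hx2
      · have := Real.strictMonoOn_sin (a := Real.pi - x) (b := -a)
          ⟨by linarith, by linarith [hx.1]⟩ ⟨by linarith, by linarith⟩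
          (by linarith [hx.1])
        rwa [Real.sin_neg, hsina, Real.sin_pi_sub] at this
      · have := Real.strictMonoOn_sin (a := x - 2 * Real.pi) (b := -a)
          ⟨by linarith, by linarith [hx.2, hθsv]⟩ ⟨by linarith, by linarith⟩
          (by rw [hθsv] at hx; linarith [hx.2])
        rwa [Real.sin_neg, hsina, Real.sin_sub_two_pi] at this
    have : lam * Real.sin x < -tau := by
      have := (mul_lt_mul_iff_right₀ hlam).mpr hsx
      rw [hk] at this
      calc lam * Real.sin x < lam * -(tau / lam) := this
        _ = -tau := by field_simp
    linarith
  have hθsz : h θs = 0 := by rw [hdef]; ring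
  have hpa_le : Real.pi + a ≤ θs := by rw [hθs]; linarith
  -- θh ≤ π + a
  have hθh_le : θh ≤ Real.pi + a := by
    by_contra hc
    push_neg at hc
    have : h θh < h θs := hmono ⟨hc.le, hmem.2.le⟩ ⟨hpa_le, le_refl _⟩ hmem.2
    rw [hzero, hθsz] at this
    exact lt_irrefl 0 this
  have hθh_lo : -a < θh := by rw [← hlo]; exact hmem.1
  have hπmem : Real.pi ∈ Set.Icc (-a) (Real.pi + a) :=
    ⟨by linarith, by linarith⟩
  have hθhmem : θh ∈ Set.Icc (-a) (Real.pi + a) := ⟨hθh_lo.le, hθh_le⟩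
  have hπval : h Real.pi = tau * (θs - Real.pi) - lam * (1 + Real.cos θs) := by
    rw [hdef, Real.cos_pi]; ring
  have equiv1 : Real.pi < θh ↔ 0 < tau * (θs - Real.pi) - lam * (1 + Real.cos θs) := by
    rw [← hπval]
    constructor
    · intro hlt
      have := hanti hπmem hθhmem hlt
      rw [hzero] at this; exact this
    · intro hpos
      by_contra hc
      push_neg at hc
      rcases lt_or_eq_of_le hc with hlt | heq
      · have := hanti hθhmem hπmem hlt
        rw [hzero] at this; linarith
      · rw [heq] at hzero; linarith
  refine ⟨equiv1, equiv1.trans ?_⟩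
  -- (ii) ↔ (iii)
  have hsq : 0 ≤ Real.sqrt (1 - k ^ 2) := Real.sqrt_nonneg _
  set s := Real.sqrt (1 - k ^ 2) with hs
  rw [hcosθs, hθs]
  have hkτ : k * lam = tau := by rw [hk]; field_simp
  constructor
  · intro hpos
    have h1 : lam * (1 + s) < tau * (Real.pi - a) := by linarith
    have h2 : (1 + s) / k < Real.pi - a := by
      rw [div_lt_iff₀ hk0]
      nlinarith
    linarith
  · intro hlt
    have h2 : (1 + s) / k < Real.pi - a := by linarith
    have h1 : 1 + s < (Real.pi - a) * k := (div_lt_iff₀ hk0).mp h2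
    nlinarith
end

section
/- Define g : (0,1) → ℝ by g(k) = (1 + √(1 − k²))/k + arcsin k. There exists a unique k₀ ∈ (0,1) with g(k₀) = π, and for every k ∈ (0,1) one has g(k) < π if and only if k > k₀; moreover 0.7 < k₀ < 0.75. -/
/-!
On `(0,1)` the function `g` has derivative `-(1 + √(1 - k²)) / k²` (the terms coming from
`√(1 - k²)` cancel against `arcsin' k = 1 / √(1 - k²)`), so it is strictly decreasing there.
Since `π < g 0.7` and `g 0.75 < π`, the intermediate value theorem gives the unique root of
`g = π`, and strict monotonicity turns `g k < π = g k₀` into `k₀ < k`. The two numerical bounds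
only use `x < arcsin x` and `arcsin x = π / 2 - arcsin √(1 - x²)` for `0 ≤ x ≤ 1`.
-/

open Real Set

namespace Real

theorem self_lt_arcsin {x : ℝ} (h₀ : 0 < x) (h₁ : x ≤ 1) : x < arcsin x := by
  simpa only [sin_arcsin (by linarith) h₁] using sin_lt (arcsin_pos.2 h₀)

end Real

noncomputable def releaseFn (k : ℝ) : ℝ := (1 + √(1 - k ^ 2)) / k + arcsin k

theorem hasDerivAt_releaseFn {x : ℝ} (hx : x ∈ Ioo (0 : ℝ) 1) :
    HasDerivAt releaseFn (-(1 + √(1 - x ^ 2)) / x ^ 2) x := by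
  obtain ⟨hx₀, hx₁⟩ := hx
  have hpos : 0 < 1 - x ^ 2 := by nlinarith
  set s := √(1 - x ^ 2) with hs
  have hs_pos : 0 < s := sqrt_pos.2 hpos
  have hs_sq : s ^ 2 = 1 - x ^ 2 := sq_sqrt hpos.le
  have hsqrt : HasDerivAt (fun k : ℝ => √(1 - k ^ 2)) (-(2 * x) / (2 * s)) x := by
    simpa using ((hasDerivAt_pow 2 x).const_sub 1).sqrt hpos.ne'
  have hsum := ((hsqrt.const_add 1).div (hasDerivAt_id x) hx₀.ne').add
    (hasDerivAt_arcsin (by linarith : x ≠ -1) hx₁.ne)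
  refine hsum.congr_deriv ?_
  rw [← hs, id]
  field_simp
  nlinarith [hs_sq]

theorem continuousOn_releaseFn : ContinuousOn releaseFn (Ioo 0 1) :=
  fun _ hx => (hasDerivAt_releaseFn hx).continuousAt.continuousWithinAt

theorem strictAntiOn_releaseFn : StrictAntiOn releaseFn (Ioo 0 1) := by
  refine strictAntiOn_of_deriv_neg (convex_Ioo 0 1) continuousOn_releaseFn fun x hx => ?_
  rw [interior_Ioo] at hx
  rw [(hasDerivAt_releaseFn hx).deriv, neg_div, neg_lt_zero]
  have hx₀ : 0 < x := hx.1
  positivity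

theorem pi_lt_releaseFn_seven_tenths : π < releaseFn 0.7 := by
  have hs : (0.714 : ℝ) < √(1 - 0.7 ^ 2) := by
    rw [lt_sqrt (by norm_num)]
    norm_num
  have harcsin := self_lt_arcsin (by norm_num : (0 : ℝ) < 0.7) (by norm_num)
  have := pi_lt_d6
  unfold releaseFn
  rw [div_eq_mul_inv]
  norm_num at hs ⊢
  linarith

theorem releaseFn_three_quarters_lt_pi : releaseFn 0.75 < π := by
  set c := √(1 - (0.75 : ℝ) ^ 2) with hc
  have hc_sq : c ^ 2 = 0.4375 := by rw [hc, sq_sqrt] <;> norm_num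
  have hc_pos : 0 < c := sqrt_pos.2 (by norm_num)
  have hc_lt : c < 0.67 := by nlinarith
  have hcomplement : arcsin (0.75 : ℝ) = π / 2 - arcsin c := by
    rw [arcsin_eq_pi_div_two_sub_arccos, arccos_eq_arcsin (by norm_num)]
  have harcsin := self_lt_arcsin hc_pos (by nlinarith)
  have := pi_gt_d6
  unfold releaseFn
  rw [← hc, hcomplement, div_eq_mul_inv]
  norm_num
  linarith

theorem exists_releaseFn_eq_pi : ∃ k₀ ∈ Ioo (0.7 : ℝ) 0.75, releaseFn k₀ = π := by
  have hsub : Icc (0.7 : ℝ) 0.75 ⊆ Ioo 0 1 := fun x hx => ⟨by linarith [hx.1], by linarith [hx.2]⟩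
  exact intermediate_value_Ioo' (by norm_num) (continuousOn_releaseFn.mono hsub)
    ⟨releaseFn_three_quarters_lt_pi, pi_lt_releaseFn_seven_tenths⟩

/-- With `g(k) = (1 + √(1 − k²))/k + arcsin k`, there is a unique
`k₀ ∈ (0,1)` with `g(k₀) = π`; for every `k ∈ (0,1)`, `g(k) < π ↔ k > k₀`;
moreover `0.7 < k₀ < 0.75`. -/
theorem stmt7 (g : ℝ → ℝ)
    (hg : ∀ k, g k = (1 + Real.sqrt (1 - k^2)) / k + Real.arcsin k) :
    ∃ k₀ : ℝ, k₀ ∈ Set.Ioo (0:ℝ) 1 ∧ g k₀ = Real.pi ∧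
      (∀ k ∈ Set.Ioo (0:ℝ) 1, g k = Real.pi → k = k₀) ∧
      (∀ k ∈ Set.Ioo (0:ℝ) 1, (g k < Real.pi ↔ k₀ < k)) ∧
      0.7 < k₀ ∧ k₀ < 0.75 := by
  obtain rfl : g = releaseFn := funext hg
  obtain ⟨k₀, ⟨hlow, hhigh⟩, hk₀⟩ := exists_releaseFn_eq_pi
  have hmem : k₀ ∈ Ioo (0 : ℝ) 1 := ⟨by linarith, by linarith⟩
  refine ⟨k₀, hmem, hk₀, fun k hk hgk => ?_, fun k hk => ?_, hlow, hhigh⟩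
  · exact strictAntiOn_releaseFn.injOn hk hmem (hgk.trans hk₀.symm)
  · rw [← hk₀]
    exact strictAntiOn_releaseFn.lt_iff_gt hk hmem
end

section
/- Let λ, τ be real numbers with 0 < τ < λ, k := τ/λ, θ⋆ := 2π − arcsin k, H⋆ := λ cos θ⋆ − τ θ⋆, h(θ) := λ cos θ − τ θ − H⋆, and let θ̂ be the unique zero of h in (θ⋆ − 2π, θ⋆). Suppose (θ, v) : I → ℝ² is a solution of θ' = v, v' = λ sin θ + τ on an interval I containing 0 with θ(0) ∈ (θ̂, θ⋆) and ½ v(0)² + λ cos θ(0) − τ θ(0) < H⋆. Then θ(t) ∈ (θ̂, θ⋆) for every t ∈ I; that is, orbits starting inside the homoclinic loop remain in the strip θ̂ < θ < θ⋆ for as long as they are defined (they are captured into resonance). -/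
/-!
The energy `½v² + λ cos θ − τθ` is a first integral, so along the orbit the potential
`λ cos θ − τθ` stays strictly below `H⋆`. The potential equals `H⋆` at both `θ⋆` and `θ̂`,
so `θ` never takes either value, and by the intermediate value theorem it cannot leave the
strip between them.
-/

open Real Set

theorem Convex.eq_of_forall_hasDerivWithinAt_zero {G : Type*} [NormedAddCommGroup G]
    [NormedSpace ℝ G] {f : ℝ → G} {s : Set ℝ} (hs : Convex ℝ s)
    (hf : ∀ t ∈ s, HasDerivWithinAt f 0 s t) {x y : ℝ} (hx : x ∈ s) (hy : y ∈ s) :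
    f y = f x := by
  have hbound := hs.norm_image_sub_le_of_norm_hasDerivWithin_le (C := 0) hf
    (fun _ _ => by simp) hx hy
  rw [zero_mul, norm_le_zero_iff, sub_eq_zero] at hbound
  exact hbound

theorem IsPreconnected.mapsTo_Ioo_of_forall_ne {X α : Type*} [TopologicalSpace X]
    [LinearOrder α] [TopologicalSpace α] [OrderClosedTopology α] {s : Set X} {f : X → α}
    {a b : α} {x₀ : X} (hs : IsPreconnected s) (hf : ContinuousOn f s) (hx₀ : x₀ ∈ s)
    (hfx₀ : f x₀ ∈ Ioo a b) (ha : ∀ x ∈ s, f x ≠ a) (hb : ∀ x ∈ s, f x ≠ b) :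
    MapsTo f s (Ioo a b) := by
  intro x hx
  by_contra hout
  rcases not_and_or.mp hout with hle | hge
  · obtain ⟨y, hy, hya⟩ :=
      hs.intermediate_value hx hx₀ hf ⟨not_lt.mp hle, hfx₀.1.le⟩
    exact ha y hy hya
  · obtain ⟨y, hy, hyb⟩ :=
      hs.intermediate_value hx₀ hx hf ⟨hfx₀.2.le, not_lt.mp hge⟩
    exact hb y hy hyb

noncomputable def pendulumEnergy (lam tau θ v : ℝ) : ℝ :=
  (1/2) * v ^ 2 + lam * Real.cos θ - tau * θ

theorem pendulumEnergy_hasDerivWithinAt_zero {lam tau : ℝ} {θ v : ℝ → ℝ} {s : Set ℝ} {t : ℝ}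
    (hθ : HasDerivWithinAt θ (v t) s t)
    (hv : HasDerivWithinAt v (lam * Real.sin (θ t) + tau) s t) :
    HasDerivWithinAt (fun t => pendulumEnergy lam tau (θ t) (v t)) 0 s t := by
  have hE := (((hv.fun_pow 2).const_mul (1/2)).fun_add (hθ.cos.const_mul lam)).fun_sub
    (hθ.const_mul tau)
  refine hE.congr_deriv ?_
  push_cast
  ring

theorem stmt13_general (lam tau θs Hstar : ℝ)
    (hH : Hstar = lam * Real.cos θs - tau * θs)
    (h : ℝ → ℝ)
    (hdef : ∀ θ, h θ = lam * Real.cos θ - tau * θ - Hstar)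
    (θh : ℝ) (hzero : h θh = 0)
    (I : Set ℝ) (hI : Convex ℝ I) (h0I : (0:ℝ) ∈ I)
    (θ v : ℝ → ℝ)
    (hsol : ∀ t ∈ I, HasDerivWithinAt θ (v t) I t ∧
      HasDerivWithinAt v (lam * Real.sin (θ t) + tau) I t)
    (hθ0 : θ 0 ∈ Set.Ioo θh θs)
    (hE0 : (1/2) * (v 0)^2 + lam * Real.cos (θ 0) - tau * θ 0 < Hstar) :
    ∀ t ∈ I, θ t ∈ Set.Ioo θh θs := by
  have hpotential : ∀ t ∈ I, lam * Real.cos (θ t) - tau * θ t < Hstar := by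
    intro t ht
    have hconserved := hI.eq_of_forall_hasDerivWithinAt_zero
      (fun s hs => pendulumEnergy_hasDerivWithinAt_zero (hsol s hs).1 (hsol s hs).2) h0I ht
    simp only [pendulumEnergy] at hconserved
    linarith [sq_nonneg (v t)]
  refine hI.isPreconnected.mapsTo_Ioo_of_forall_ne
    (fun t ht => (hsol t ht).1.continuousWithinAt) h0I hθ0 ?_ ?_
  · intro t ht hθt
    have hlt := hpotential t ht
    rw [hθt] at hlt
    linarith [hdef θh]
  · intro t ht hθt
    have hlt := hpotential t ht
    rw [hθt] at hlt
    linarith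

/-- If `(θ, v) : I → ℝ²` solves `θ' = v`, `v' = λ sin θ + τ` on
an interval `I` containing `0` with `θ(0) ∈ (θ̂, θ⋆)` and energy
`½v(0)² + λ cos θ(0) − τθ(0) < H⋆`, then `θ(t) ∈ (θ̂, θ⋆)` for every `t ∈ I`:
orbits starting inside the homoclinic loop remain in the strip `θ̂ < θ < θ⋆`
for as long as they are defined. -/
theorem stmt13 (lam tau k θs Hstar : ℝ) (htau : 0 < tau) (htl : tau < lam)
    (hk : k = tau / lam) (hθs : θs = 2 * Real.pi - Real.arcsin k)
    (hH : Hstar = lam * Real.cos θs - tau * θs)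
    (h : ℝ → ℝ)
    (hdef : ∀ θ, h θ = lam * Real.cos θ - tau * θ - Hstar)
    (θh : ℝ) (hmem : θh ∈ Set.Ioo (θs - 2 * Real.pi) θs) (hzero : h θh = 0)
    (I : Set ℝ) (hI : Convex ℝ I) (h0I : (0:ℝ) ∈ I)
    (θ v : ℝ → ℝ)
    (hsol : ∀ t ∈ I, HasDerivWithinAt θ (v t) I t ∧
      HasDerivWithinAt v (lam * Real.sin (θ t) + tau) I t)
    (hθ0 : θ 0 ∈ Set.Ioo θh θs)
    (hE0 : (1/2) * (v 0)^2 + lam * Real.cos (θ 0) - tau * θ 0 < Hstar) :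
    ∀ t ∈ I, θ t ∈ Set.Ioo θh θs :=
  stmt13_general lam tau θs Hstar hH h hdef θh hzero I hI h0I θ v hsol hθ0 hE0
end
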